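/- arXiv:1808.03382 — 2 statements merged into one kernel-verified Lean document; each statement's English description precedes it below -/
import Mathlib

section
/- Let ψ be a normalized free N-partite state, and define the operator X_ψ on states by (X_ψ φ)(j) = ∑_{i} ∑_{l ∈ Fin (d i)} ρ⁽ⁱ⁾(ψ)_{j i, l} · φ(Function.update j i l) (the action of ∑ᵢ 1 ⊗ ⋯ ⊗ ρ⁽ⁱ⁾(ψ) ⊗ ⋯ ⊗ 1). Then for λ ∈ ℂ one has X_ψ ψ = λ ψ if and only if for every j ∈ supp(ψ): ∑_{i} ∑_{k ∈ supp(ψ), k i = j i} |ψ k|² = λ. -/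
/-!
If `ψ j ≠ 0` and `l ≠ j i`, then `j` and `Function.update j i l` differ in exactly one
coordinate, so freeness forces `ψ (Function.update j i l) = 0`. Hence every reduced density
matrix of a free state is diagonal, `X_ψ` acts on `ψ` as multiplication by
`D j = ∑ᵢ ρ⁽ⁱ⁾(ψ)_{j i, j i} = ∑ᵢ ∑_{k i = j i} |ψ k|²`, and `X_ψ ψ = λ ψ` says exactly that
`D = λ` on the support of `ψ`.
-/

open scoped BigOperators Classical

/-- The `i`-th reduced density matrix of an `N`-partite state `ψ`. -/
noncomputable def rdm {N : ℕ} {d : Fin N → ℕ} (ψ : (∀ i, Fin (d i)) → ℂ) (i : Fin N) :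
    Matrix (Fin (d i)) (Fin (d i)) ℂ :=
  fun k l => ∑ j : ∀ i', Fin (d i'),
    if j i = k then ψ j * (starRingEnd ℂ) (ψ (Function.update j i l)) else 0

/-- A state is free if any two distinct elements of its support differ in at least
two coordinates. -/
def IsFree {N : ℕ} {d : Fin N → ℕ} (ψ : (∀ i, Fin (d i)) → ℂ) : Prop :=
  ∀ j k : ∀ i, Fin (d i), ψ j ≠ 0 → ψ k ≠ 0 → j ≠ k →
    ∃ i₁ i₂ : Fin N, i₁ ≠ i₂ ∧ j i₁ ≠ k i₁ ∧ j i₂ ≠ k i₂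

theorem Matrix.IsDiag.sum_mul_update {ι R : Type*} [DecidableEq ι] [Semiring R]
    {κ : ι → Type*} {i : ι} [Fintype (κ i)] [DecidableEq (κ i)]
    {A : Matrix (κ i) (κ i) R} (hA : A.IsDiag) (φ : (∀ i, κ i) → R) (j : ∀ i, κ i) :
    ∑ l, A (j i) l * φ (Function.update j i l) = A (j i) (j i) * φ j := by
  rw [Finset.sum_eq_single (j i) (fun l _ hl => by rw [hA hl.symm, zero_mul])
    (fun h => absurd (Finset.mem_univ _) h), Function.update_eq_self]

section

variable {N : ℕ} {d : Fin N → ℕ}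

theorem rdm_apply_self (ψ : (∀ i, Fin (d i)) → ℂ) (i : Fin N) (k : Fin (d i)) :
    rdm ψ i k k = ((∑ m : ∀ i', Fin (d i'), if m i = k then ‖ψ m‖ ^ 2 else 0 : ℝ) : ℂ) := by
  push_cast
  refine Finset.sum_congr rfl fun m _ => ?_
  split_ifs with hm
  · rw [← hm, Function.update_eq_self, Complex.mul_conj, Complex.normSq_eq_norm_sq]
  · rfl

theorem IsFree.eq_of_apply_update_ne_zero {ψ : (∀ i, Fin (d i)) → ℂ} (hfree : IsFree ψ)
    {j : ∀ i, Fin (d i)} {i : Fin N} {l : Fin (d i)} (hj : ψ j ≠ 0)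
    (hl : ψ (Function.update j i l) ≠ 0) : l = j i := by
  by_contra hne
  have hdiff : ∀ i', j i' ≠ Function.update j i l i' → i' = i := fun i' h =>
    by_contra fun h' => h (Function.update_of_ne h' l j).symm
  obtain ⟨i₁, i₂, h12, h₁, h₂⟩ :=
    hfree j _ hj hl fun h => hne (by simpa using (congrFun h i).symm)
  exact h12 ((hdiff i₁ h₁).trans (hdiff i₂ h₂).symm)

theorem IsFree.isDiag_rdm {ψ : (∀ i, Fin (d i)) → ℂ} (hfree : IsFree ψ) (i : Fin N) :
    (rdm ψ i).IsDiag := by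
  intro k l hkl
  refine Finset.sum_eq_zero fun m _ => ?_
  split_ifs with hm
  · by_cases hm₀ : ψ m = 0
    · rw [hm₀, zero_mul]
    by_cases hl₀ : ψ (Function.update m i l) = 0
    · rw [hl₀, map_zero, mul_zero]
    exact absurd (hm.symm.trans (hfree.eq_of_apply_update_ne_zero hm₀ hl₀).symm) hkl
  · rfl

end

theorem free_eigenvector_iff_general {N : ℕ} {d : Fin N → ℕ}
    (ψ : (∀ i, Fin (d i)) → ℂ)
    (hfree : IsFree ψ) (lam : ℂ) :
    (∀ j : ∀ i, Fin (d i),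
        (∑ i : Fin N, ∑ l : Fin (d i), rdm ψ i (j i) l * ψ (Function.update j i l))
          = lam * ψ j) ↔
    (∀ j : ∀ i, Fin (d i), ψ j ≠ 0 →
        ((∑ i : Fin N, ∑ k : ∀ i', Fin (d i'),
            if ψ k ≠ 0 ∧ k i = j i then ‖ψ k‖ ^ 2 else 0 : ℝ) : ℂ) = lam) := by
  have hX : ∀ j : ∀ i, Fin (d i),
      ∑ i, ∑ l, rdm ψ i (j i) l * ψ (Function.update j i l)
        = (∑ i, rdm ψ i (j i) (j i)) * ψ j := fun j => by
    rw [Finset.sum_mul]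
    exact Finset.sum_congr rfl fun i _ =>
      (hfree.isDiag_rdm i).sum_mul_update (κ := fun i => Fin (d i)) ψ j
  have hD : ∀ j : ∀ i, Fin (d i), ∑ i, rdm ψ i (j i) (j i)
      = ((∑ i, ∑ k : ∀ i', Fin (d i'),
          if ψ k ≠ 0 ∧ k i = j i then ‖ψ k‖ ^ 2 else 0 : ℝ) : ℂ) := fun j => by
    push_cast
    refine Finset.sum_congr rfl fun i _ => ?_
    rw [rdm_apply_self]
    push_cast
    refine Finset.sum_congr rfl fun k _ => ?_
    by_cases hk : ψ k = 0 <;> simp [hk]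
  simp only [hX, hD, mul_eq_mul_right_iff, or_iff_not_imp_right]

/-- Criterion for a normalized free state to be an eigenvector of
`X_ψ = ∑ᵢ 1 ⊗ ⋯ ⊗ ρ⁽ⁱ⁾(ψ) ⊗ ⋯ ⊗ 1`. -/
theorem free_eigenvector_iff {N : ℕ} {d : Fin N → ℕ} (hd : ∀ i, 1 ≤ d i)
    (ψ : (∀ i, Fin (d i)) → ℂ)
    (hnorm : ∑ j : ∀ i, Fin (d i), ‖ψ j‖ ^ 2 = 1)
    (hfree : IsFree ψ) (lam : ℂ) :
    (∀ j : ∀ i, Fin (d i),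
        (∑ i : Fin N, ∑ l : Fin (d i), rdm ψ i (j i) l * ψ (Function.update j i l))
          = lam * ψ j) ↔
    (∀ j : ∀ i, Fin (d i), ψ j ≠ 0 →
        ((∑ i : Fin N, ∑ k : ∀ i', Fin (d i'),
            if ψ k ≠ 0 ∧ k i = j i then ‖ψ k‖ ^ 2 else 0 : ℝ) : ℂ) = lam) :=
  free_eigenvector_iff_general ψ hfree lam
end

section
/- Let N, M be natural numbers with 2M < N, and let |M,N⟩ : (Fin N → Fin 2) → ℂ be the symmetric Dicke state, defined by |M,N⟩(j) = 1 if card {i : j i = 1} = M and |M,N⟩(j) = 0 otherwise. Then every normalized state ψ in the closure of the SLOCC cone of |M,N⟩ under SL(2,ℂ)^N satisfies ∑_{i ∈ Fin N} λ_max(ρ⁽ⁱ⁾(ψ)) ≥ N − M. -/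
/-
The SLOCC cone of a Dicke state is swept out by local operators `g = (g₁, …, g_N)`. Factor each
`gᵢ = uᵢ tᵢ` with `uᵢ` unitary and `tᵢ` upper triangular. Upper triangular factors never raise the
number of excited qubits, so `χ = c • (t · |M,N⟩)` is supported on strings with at most `M` ones;
hence `∑ᵢ ρ⁽ⁱ⁾(χ)₀₀ ≥ (N - M)‖χ‖²`. The unitary part conjugates each `ρ⁽ⁱ⁾` and preserves the norm,
so `λ_max(ρ⁽ⁱ⁾(u · χ)) = λ_max(ρ⁽ⁱ⁾(χ)) ≥ ρ⁽ⁱ⁾(χ)₀₀`, and every state of the cone satisfies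
`(N - M)‖φ‖² ≤ ∑ᵢ λ_max(ρ⁽ⁱ⁾(φ))`. For a Hermitian `2 × 2` matrix `λ_max` is given by a
continuous closed formula, so this inequality defines a closed set and passes to the closure.
-/

open scoped BigOperators

/-- The `i`-th one-qubit reduced density matrix of an `N`-qubit state. -/
noncomputable def qrdm {N : ℕ} (ψ : (Fin N → Fin 2) → ℂ) (i : Fin N) :
    Matrix (Fin 2) (Fin 2) ℂ :=
  fun k l => ∑ j : Fin N → Fin 2,
    if j i = k then ψ j * (starRingEnd ℂ) (ψ (Function.update j i l)) else 0

/-- The largest real eigenvalue of a (Hermitian) complex matrix. -/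
noncomputable def lmax {n : ℕ} (M : Matrix (Fin n) (Fin n) ℂ) : ℝ :=
  sSup {r : ℝ | Module.End.HasEigenvalue (Matrix.mulVecLin M) ((r : ℂ))}

/-- The symmetric Dicke state `|M,N⟩` with `M` excitations. -/
noncomputable def dicke (N M : ℕ) : (Fin N → Fin 2) → ℂ :=
  fun j => if (Finset.univ.filter fun i => j i = 1).card = M then 1 else 0

/-- The Kronecker/tensor product action of `SL(2,ℂ)^N` on `N`-qubit states. -/
noncomputable def qact {N : ℕ} (g : Fin N → Matrix.SpecialLinearGroup (Fin 2) ℂ)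
    (ψ : (Fin N → Fin 2) → ℂ) : (Fin N → Fin 2) → ℂ :=
  fun j => ∑ m : Fin N → Fin 2,
    (∏ i, (g i : Matrix (Fin 2) (Fin 2) ℂ) (j i) (m i)) * ψ m

/-- The SLOCC cone of an `N`-qubit state. -/
def qcone {N : ℕ} (ψ : (Fin N → Fin 2) → ℂ) : Set ((Fin N → Fin 2) → ℂ) :=
  {φ | ∃ (c : ℂ) (g : Fin N → Matrix.SpecialLinearGroup (Fin 2) ℂ), φ = c • qact g ψ}

open Matrix
open scoped ComplexConjugate

theorem Matrix.hasEigenvalue_mulVecLin_iff_det_eq_zero {n : Type*} [Fintype n] [DecidableEq n]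
    {K : Type*} [Field K] (A : Matrix n n K) (μ : K) :
    Module.End.HasEigenvalue A.mulVecLin μ ↔ (A - μ • 1).det = 0 := by
  rw [Module.End.hasEigenvalue_iff, Module.End.eigenspace_def,
    ← LinearMap.det_eq_zero_iff_ker_ne_bot, ← Matrix.toLin'_apply', Module.End.one_eq_id,
    ← Matrix.toLin'_one, ← map_smul, ← map_sub, LinearMap.det_toLin']

theorem lmax_unitary_conj {n : ℕ} {u : Matrix (Fin n) (Fin n) ℂ}
    (hu : u ∈ unitaryGroup (Fin n) ℂ) (A : Matrix (Fin n) (Fin n) ℂ) :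
    lmax (u * A * star u) = lmax A := by
  have hdet (μ : ℂ) : (u * A * star u - μ • 1).det = (A - μ • 1).det := by
    have h1 : u * A * star u - μ • 1 = u * (A - μ • 1) * star u := by
      rw [Matrix.mul_sub, Matrix.sub_mul, Matrix.mul_smul, Matrix.smul_mul, Matrix.mul_one,
        Unitary.mul_star_self_of_mem hu]
    rw [h1, det_mul, det_mul, mul_comm, ← mul_assoc, ← det_mul, Unitary.star_mul_self_of_mem hu,
      det_one, one_mul]
  simp only [lmax, Matrix.hasEigenvalue_mulVecLin_iff_det_eq_zero, hdet]

theorem isGreatest_setOf_mul_sub_eq (a d q : ℝ) (hq : 0 ≤ q) :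
    IsGreatest {r : ℝ | (r - a) * (r - d) = q} ((a + d + √((a - d) ^ 2 + 4 * q)) / 2) := by
  have hD : 0 ≤ (a - d) ^ 2 + 4 * q := by positivity
  refine ⟨?_, fun r (hr : (r - a) * (r - d) = q) => ?_⟩
  · show _ = _
    linear_combination Real.sq_sqrt hD / 4
  · have h : (2 * r - a - d) ^ 2 ≤ (a - d) ^ 2 + 4 * q := by nlinarith
    linarith [(abs_le.mp (Real.abs_le_sqrt h)).2]

theorem lmax_eq_of_isHermitian {ρ : Matrix (Fin 2) (Fin 2) ℂ} (hρ : ρ.IsHermitian) :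
    lmax ρ = ((ρ 0 0).re + (ρ 1 1).re
      + √(((ρ 0 0).re - (ρ 1 1).re) ^ 2 + 4 * ‖ρ 0 1‖ ^ 2)) / 2 := by
  set a := (ρ 0 0).re
  set d := (ρ 1 1).re
  have hdet (r : ℝ) : (ρ - (r : ℂ) • 1).det = (((a - r) * (d - r) - ‖ρ 0 1‖ ^ 2 : ℝ) : ℂ) := by
    have h00 : ρ 0 0 = a := (hρ.coe_re_apply_self 0).symm
    have h11 : ρ 1 1 = d := (hρ.coe_re_apply_self 1).symm
    have h10 : ρ 1 0 = star (ρ 0 1) := (hρ.apply 1 0).symm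
    simp only [det_fin_two, Matrix.sub_apply, Matrix.smul_apply, one_apply_eq,
      one_apply_ne zero_ne_one, one_apply_ne one_ne_zero, h00, h11, h10, RCLike.star_def,
      smul_eq_mul, mul_zero, sub_zero, Complex.mul_conj']
    push_cast
    ring
  have hset : {r : ℝ | Module.End.HasEigenvalue ρ.mulVecLin (r : ℂ)}
      = {r : ℝ | (r - a) * (r - d) = ‖ρ 0 1‖ ^ 2} := by
    ext r
    simp only [Set.mem_ofPred_eq, hasEigenvalue_mulVecLin_iff_det_eq_zero, hdet,
      Complex.ofReal_eq_zero, sub_eq_zero]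
    constructor <;> intro h <;> linarith
  rw [lmax, hset]
  exact (isGreatest_setOf_mul_sub_eq a d _ (sq_nonneg _)).csSup_eq

theorem re_apply_zero_zero_le_lmax {ρ : Matrix (Fin 2) (Fin 2) ℂ} (hρ : ρ.IsHermitian) :
    (ρ 0 0).re ≤ lmax ρ := by
  rw [lmax_eq_of_isHermitian hρ]
  have h : ((ρ 0 0).re - (ρ 1 1).re) ^ 2 ≤ ((ρ 0 0).re - (ρ 1 1).re) ^ 2 + 4 * ‖ρ 0 1‖ ^ 2 :=
    le_add_of_nonneg_right (by positivity)
  linarith [(abs_le.mp (Real.abs_le_sqrt h)).2]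

-- QR decomposition: the first column of `u` is the normalised first column of `g`.
theorem exists_unitary_star_mul_apply_one_zero (g : Matrix (Fin 2) (Fin 2) ℂ) :
    ∃ u ∈ unitaryGroup (Fin 2) ℂ, (star u * g) 1 0 = 0 := by
  set a := g 0 0
  set c := g 1 0
  by_cases h0 : a = 0 ∧ c = 0
  · exact ⟨1, one_mem _, by simp [c, h0.2]⟩
  have hpos : 0 < ‖a‖ ^ 2 + ‖c‖ ^ 2 := by
    rcases not_and_or.mp h0 with h | h
    · have := norm_pos_iff.mpr h; positivity
    · have := norm_pos_iff.mpr h; positivity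
  set n : ℂ := ((√(‖a‖ ^ 2 + ‖c‖ ^ 2) : ℝ) : ℂ)
  have hn0 : n ≠ 0 := Complex.ofReal_ne_zero.mpr (Real.sqrt_pos.mpr hpos).ne'
  have hn : conj a * a + conj c * c = n ^ 2 := by
    simp only [n, ← Complex.ofReal_pow, Real.sq_sqrt hpos.le, Complex.conj_mul']
    push_cast; ring
  have hnc : conj n = n := Complex.conj_ofReal _
  refine ⟨!![a / n, -conj c / n; c / n, conj a / n], ?_, ?_⟩
  · rw [mem_unitaryGroup_iff']
    ext k l
    fin_cases k <;> fin_cases l <;>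
      simp only [star_eq_conjTranspose, mul_apply, conjTranspose_apply, of_apply, cons_val',
        cons_val_zero, cons_val_one, cons_val_fin_one, Fin.zero_eta, Fin.mk_one, Fin.isValue,
        RCLike.star_def, Fin.sum_univ_two, map_div₀, map_neg, RingHomCompTriple.comp_apply,
        RingHom.id_apply, hnc, one_apply_eq, one_apply_ne, ne_eq, zero_ne_one, one_ne_zero,
        not_false_eq_true] <;>
      field_simp <;> first | linear_combination hn | ring
  · simp only [star_eq_conjTranspose, mul_apply, conjTranspose_apply, of_apply, cons_val',
      cons_val_zero, cons_val_one, cons_val_fin_one, Fin.isValue, RCLike.star_def,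
      Fin.sum_univ_two, map_div₀, map_neg, RingHomCompTriple.comp_apply, RingHom.id_apply, hnc, a, c]
    ring

theorem Matrix.transpose_mul_conjTranspose_transpose_of_mem_unitaryGroup {n : Type*} [Fintype n]
    [DecidableEq n] {u : Matrix n n ℂ} (hu : u ∈ unitaryGroup n ℂ) : uᵀ * uᴴᵀ = 1 := by
  rw [← transpose_mul, ← star_eq_conjTranspose, mem_unitaryGroup_iff'.mp hu, transpose_one]

/-- The operator `A` acting on site `i` of a tensor product, `1 ⊗ ⋯ ⊗ A ⊗ ⋯ ⊗ 1`. -/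
def atSite {ι κ R : Type*} [DecidableEq ι] [DecidableEq κ] [Zero R] [One R] (i : ι)
    (A : Matrix κ κ R) : ι → Matrix κ κ R :=
  Function.update 1 i A

theorem atSite_comp {ι κ R S : Type*} [DecidableEq ι] [DecidableEq κ] [Zero R] [One R] [Zero S]
    [One S] {f : ι → Matrix κ κ R → Matrix κ κ S} (hf : ∀ t, f t 1 = 1) (i : ι)
    (A : Matrix κ κ R) : (fun t => f t (atSite i A t)) = atSite i (f i A) := by
  funext t
  by_cases ht : t = i
  · subst ht; simp [atSite]
  · simp [atSite, Function.update_of_ne ht, hf]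

theorem prod_atSite_apply {ι κ R : Type*} [Fintype ι] [DecidableEq ι] [DecidableEq κ]
    [CommSemiring R] (i : ι) (A : Matrix κ κ R) (j j' : ι → κ) :
    ∏ t, atSite i A t (j t) (j' t)
      = if j' = Function.update j i (j' i) then A (j i) (j' i) else 0 := by
  have hrest : ∏ t ∈ {i}ᶜ, atSite i A t (j t) (j' t)
      = ∏ t ∈ {i}ᶜ, if j t = j' t then (1 : R) else 0 := by
    refine Finset.prod_congr rfl fun t ht => ?_
    rw [atSite, Function.update_of_ne (by simpa using ht), Pi.one_apply, one_apply]
  have hiff : j' = Function.update j i (j' i) ↔ ∀ t ∈ ({i}ᶜ : Finset ι), j t = j' t := by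
    simp [Function.eq_update_iff, eq_comm]
  rw [Fintype.prod_eq_mul_prod_compl i, hrest, atSite, Function.update_self, Finset.prod_boole]
  by_cases h : ∀ t ∈ ({i}ᶜ : Finset ι), j t = j' t
  · rw [if_pos h, if_pos (hiff.2 h), mul_one]
  · rw [if_neg h, if_neg (mt hiff.1 h), mul_zero]

section KroneckerAction

variable {ι κ : Type*} [Fintype ι] [DecidableEq ι] [Fintype κ]

noncomputable def kronAct (g : ι → Matrix κ κ ℂ) (ψ : (ι → κ) → ℂ) : (ι → κ) → ℂ :=
  fun j => ∑ m, (∏ t, g t (j t) (m t)) * ψ m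

/-- `ψᵀ (⨂ₜ Eₜ) ψ̄`. With `Eₜ = 1` except for a matrix unit at site `i` this is an entry of
`ρ⁽ⁱ⁾(ψ)`, so local operators acting on `ψ` become a change of the `Eₜ`. -/
noncomputable def kronForm (E : ι → Matrix κ κ ℂ) (ψ : (ι → κ) → ℂ) : ℂ :=
  ∑ j, ∑ j', (∏ t, E t (j t) (j' t)) * (ψ j * conj (ψ j'))

theorem kronAct_smul (g : ι → Matrix κ κ ℂ) (c : ℂ) (ψ : (ι → κ) → ℂ) :
    kronAct g (c • ψ) = c • kronAct g ψ := by
  ext j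
  simp only [kronAct, Pi.smul_apply, smul_eq_mul, Finset.mul_sum]
  exact Finset.sum_congr rfl fun m _ => by ring

theorem kronAct_kronAct (g h : ι → Matrix κ κ ℂ) (ψ : (ι → κ) → ℂ) :
    kronAct g (kronAct h ψ) = kronAct (g * h) ψ := by
  ext j
  simp only [kronAct, Pi.mul_apply, mul_apply, Finset.mul_sum]
  rw [Finset.sum_comm]
  refine Finset.sum_congr rfl fun p _ => ?_
  rw [Finset.prod_univ_sum, Finset.sum_mul]
  refine Finset.sum_congr rfl fun m _ => ?_
  rw [Finset.prod_mul_distrib]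
  ring

theorem sum_sum_prod_eq_prod_sum_sum {R : Type*} [CommSemiring R] (f : ι → κ → κ → R) :
    ∑ j : ι → κ, ∑ j' : ι → κ, ∏ t, f t (j t) (j' t) = ∏ t, ∑ a, ∑ b, f t a b := by
  simp_rw [Fintype.prod_sum]

theorem kronForm_kronAct (E u : ι → Matrix κ κ ℂ) (ψ : (ι → κ) → ℂ) :
    kronForm E (kronAct u ψ) = kronForm (fun t => (u t)ᵀ * E t * (u t)ᴴᵀ) ψ := by
  have hprod (m m' : ι → κ) : ∏ t, ((u t)ᵀ * E t * (u t)ᴴᵀ) (m t) (m' t)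
      = ∑ j : ι → κ, ∑ j' : ι → κ,
          ∏ t, u t (j t) (m t) * E t (j t) (j' t) * conj (u t (j' t) (m' t)) := by
    rw [sum_sum_prod_eq_prod_sum_sum fun t a b => u t a (m t) * E t a b * conj (u t b (m' t))]
    simp only [mul_apply, transpose_apply, conjTranspose_apply, RCLike.star_def, Finset.sum_mul]
    exact Finset.prod_congr rfl fun t _ => Finset.sum_comm
  have swap (F : (ι → κ) → (ι → κ) → (ι → κ) → (ι → κ) → ℂ) :
      ∑ j, ∑ j', ∑ m', ∑ m, F j j' m' m = ∑ m, ∑ m', ∑ j, ∑ j', F j j' m' m := by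
    calc _ = ∑ p : (ι → κ) × (ι → κ), ∑ q : (ι → κ) × (ι → κ), F p.1 p.2 q.1 q.2 := by
          simp only [Fintype.sum_prod_type]
      _ = ∑ q : (ι → κ) × (ι → κ), ∑ p : (ι → κ) × (ι → κ), F p.1 p.2 q.1 q.2 :=
          Finset.sum_comm
      _ = _ := by
          simp only [Fintype.sum_prod_type]
          exact Finset.sum_comm
  simp only [kronForm, kronAct, hprod, map_sum, map_mul, map_prod,
    Finset.mul_sum, Finset.sum_mul]
  rw [swap]
  refine Finset.sum_congr rfl fun m _ => Finset.sum_congr rfl fun m' _ =>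
    Finset.sum_congr rfl fun j _ => Finset.sum_congr rfl fun j' _ => ?_
  simp only [Finset.prod_mul_distrib]
  ring

theorem sum_ite_eq_update [DecidableEq κ] {M : Type*} [AddCommMonoid M] (F : (ι → κ) → M)
    (j : ι → κ) (i : ι) :
    ∑ j', (if j' = Function.update j i (j' i) then F j' else 0)
      = ∑ b, F (Function.update j i b) := by
  have h (j' : ι → κ) : (if j' = Function.update j i (j' i) then F j' else 0)
      = ∑ b, if j' = Function.update j i b then F j' else 0 := by
    split_ifs with hj'
    · rw [Finset.sum_eq_single (j' i), if_pos hj']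
      · intro b _ hb
        exact if_neg fun h => hb (by simpa using (congrFun h i).symm)
      · simp
    · refine (Finset.sum_eq_zero fun b _ => if_neg fun h => hj' ?_).symm
      rw [h, Function.update_self]
  simp_rw [h]
  rw [Finset.sum_comm]
  exact Finset.sum_congr rfl fun b _ => by simp

theorem kronForm_atSite [DecidableEq κ] (i : ι) (A : Matrix κ κ ℂ) (ψ : (ι → κ) → ℂ) :
    kronForm (atSite i A) ψ
      = ∑ j, ∑ b, A (j i) b * (ψ j * conj (ψ (Function.update j i b))) := by
  simp_rw [kronForm, prod_atSite_apply, ite_mul, zero_mul]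
  refine Finset.sum_congr rfl fun j _ => ?_
  rw [sum_ite_eq_update (fun j' => A (j i) (j' i) * (ψ j * conj (ψ j')))]
  simp only [Function.update_self]

theorem kronForm_one [DecidableEq κ] (ψ : (ι → κ) → ℂ) :
    kronForm 1 ψ = ∑ j, ψ j * conj (ψ j) := by
  have hprod (j j' : ι → κ) :
      ∏ t, (1 : ι → Matrix κ κ ℂ) t (j t) (j' t) = if j = j' then 1 else 0 := by
    simp only [Pi.one_apply, one_apply, Finset.prod_boole, Finset.mem_univ, true_implies,
      funext_iff]
  simp only [kronForm, hprod, ite_mul, one_mul, zero_mul, Finset.sum_ite_eq, Finset.mem_univ,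
    if_true]

theorem sum_norm_sq_kronAct [DecidableEq κ] {u : ι → Matrix κ κ ℂ}
    (hu : ∀ t, u t ∈ unitaryGroup κ ℂ) (ψ : (ι → κ) → ℂ) :
    ∑ j, ‖kronAct u ψ j‖ ^ 2 = ∑ j, ‖ψ j‖ ^ 2 := by
  apply Complex.ofReal_injective
  push_cast
  simp_rw [← Complex.mul_conj', ← kronForm_one, kronForm_kronAct]
  congr 1
  funext t
  rw [Pi.one_apply, Matrix.mul_one,
    transpose_mul_conjTranspose_transpose_of_mem_unitaryGroup (hu t)]

theorem star_kronForm (E : ι → Matrix κ κ ℂ) (ψ : (ι → κ) → ℂ) :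
    star (kronForm E ψ) = kronForm (fun t => (E t)ᴴ) ψ := by
  simp only [kronForm, star_sum, star_mul', star_prod, conjTranspose_apply, RCLike.star_def,
    Complex.conj_conj]
  rw [Finset.sum_comm]
  exact Finset.sum_congr rfl fun j _ => Finset.sum_congr rfl fun j' _ => by ring

end KroneckerAction

section Qubits

variable {N : ℕ}

theorem kronForm_atSite_eq_sum_qrdm (ψ : (Fin N → Fin 2) → ℂ) (i : Fin N)
    (A : Matrix (Fin 2) (Fin 2) ℂ) :
    kronForm (atSite i A) ψ = ∑ a, ∑ b, A a b * qrdm ψ i a b := by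
  have hcollapse (j : Fin N → Fin 2) (b : Fin 2) (y : ℂ) :
      A (j i) b * y = ∑ a, if j i = a then A a b * y else 0 := by
    rw [Finset.sum_ite_eq, if_pos (Finset.mem_univ _)]
  simp only [kronForm_atSite, qrdm, Finset.mul_sum, mul_ite, mul_zero, hcollapse]
  rw [Finset.sum_comm]
  exact (Finset.sum_congr rfl fun b _ => Finset.sum_comm).trans Finset.sum_comm

theorem qrdm_eq_kronForm (ψ : (Fin N → Fin 2) → ℂ) (i : Fin N) (k l : Fin 2) :
    qrdm ψ i k l = kronForm (atSite i (single k l 1)) ψ := by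
  simp [kronForm_atSite_eq_sum_qrdm, single_apply, ite_and]

theorem qrdm_kronAct {u : Fin N → Matrix (Fin 2) (Fin 2) ℂ}
    (hu : ∀ t, u t ∈ unitaryGroup (Fin 2) ℂ) (ψ : (Fin N → Fin 2) → ℂ) (i : Fin N) :
    qrdm (kronAct u ψ) i = u i * qrdm ψ i * star (u i) := by
  ext k l
  have hE : (fun t => (u t)ᵀ * atSite i (single k l 1) t * (u t)ᴴᵀ)
      = atSite i ((u i)ᵀ * single k l 1 * (u i)ᴴᵀ) :=
    atSite_comp (f := fun t B => (u t)ᵀ * B * (u t)ᴴᵀ) (fun t => by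
      rw [Matrix.mul_one, transpose_mul_conjTranspose_transpose_of_mem_unitaryGroup (hu t)]) _ _
  have hentry (a b : Fin 2) :
      ((u i)ᵀ * single k l (1 : ℂ) * (u i)ᴴᵀ) a b = u i k a * conj (u i l b) := by
    simp [mul_apply, single_apply, ite_and]
  rw [qrdm_eq_kronForm, kronForm_kronAct, hE, kronForm_atSite_eq_sum_qrdm]
  simp only [hentry, mul_apply, star_apply, RCLike.star_def, Finset.sum_mul]
  rw [Finset.sum_comm]
  exact Finset.sum_congr rfl fun b _ => Finset.sum_congr rfl fun a _ => by ring

theorem qrdm_isHermitian (ψ : (Fin N → Fin 2) → ℂ) (i : Fin N) : (qrdm ψ i).IsHermitian := by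
  ext k l
  have hE : (fun t => (atSite i (single l k (1 : ℂ)) t)ᴴ) = atSite i (single l k 1)ᴴ :=
    atSite_comp (fun _ => conjTranspose_one) _ _
  rw [conjTranspose_apply, qrdm_eq_kronForm, star_kronForm, hE, conjTranspose_single, star_one,
    ← qrdm_eq_kronForm]

theorem continuous_qrdm_apply (i : Fin N) (k l : Fin 2) :
    Continuous fun φ : (Fin N → Fin 2) → ℂ => qrdm φ i k l :=
  continuous_finsetSum _ fun j _ => by split_ifs <;> fun_prop

theorem continuous_lmax_qrdm (i : Fin N) :
    Continuous fun φ : (Fin N → Fin 2) → ℂ => lmax (qrdm φ i) := by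
  simp_rw [lmax_eq_of_isHermitian (qrdm_isHermitian _ i)]
  have h00 := continuous_qrdm_apply (N := N) i 0 0
  have h01 := continuous_qrdm_apply (N := N) i 0 1
  have h11 := continuous_qrdm_apply (N := N) i 1 1
  fun_prop

theorem re_qrdm_zero_zero (ψ : (Fin N → Fin 2) → ℂ) (i : Fin N) :
    (qrdm ψ i 0 0).re = ∑ j, if j i = 0 then ‖ψ j‖ ^ 2 else 0 := by
  rw [qrdm, Complex.re_sum]
  refine Finset.sum_congr rfl fun j _ => ?_
  split_ifs with h
  · rw [← h, Function.update_eq_self, Complex.mul_conj', ← Complex.ofReal_pow, Complex.ofReal_re]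
  · rfl

theorem sub_mul_sum_norm_sq_le_sum_re_qrdm (M : ℕ) {χ : (Fin N → Fin 2) → ℂ}
    (hχ : ∀ j, χ j ≠ 0 → (Finset.univ.filter fun i => j i = 1).card ≤ M) :
    ((N : ℝ) - M) * ∑ j, ‖χ j‖ ^ 2 ≤ ∑ i, (qrdm χ i 0 0).re := by
  have hcount : ∑ i, (qrdm χ i 0 0).re
      = ∑ j, ((Finset.univ.filter fun i => j i = 0).card : ℝ) * ‖χ j‖ ^ 2 := by
    simp only [re_qrdm_zero_zero]
    rw [Finset.sum_comm]
    simp [Finset.sum_ite, Finset.sum_const]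
  rw [hcount, Finset.mul_sum]
  refine Finset.sum_le_sum fun j _ => ?_
  by_cases hj : χ j = 0
  · simp [hj]
  refine mul_le_mul_of_nonneg_right ?_ (sq_nonneg _)
  have hsplit := Finset.card_filter_add_card_filter_not (s := Finset.univ) (fun i => j i = 0)
  have hones : (Finset.univ.filter fun i => ¬ j i = 0) = Finset.univ.filter fun i => j i = 1 :=
    Finset.filter_congr fun i _ => ⟨Fin.eq_one_of_ne_zero _, fun h => h ▸ one_ne_zero⟩
  rw [hones, Finset.card_univ, Fintype.card_fin] at hsplit
  have := hχ j hj
  rw [sub_le_iff_le_add]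
  exact_mod_cast (by omega : N ≤ (Finset.univ.filter fun i => j i = 0).card + M)

theorem qact_eq_kronAct (g : Fin N → SpecialLinearGroup (Fin 2) ℂ) (ψ : (Fin N → Fin 2) → ℂ) :
    qact g ψ = kronAct (fun i => (g i : Matrix (Fin 2) (Fin 2) ℂ)) ψ :=
  rfl

theorem card_filter_le_of_kronAct_dicke_ne_zero {M : ℕ} {t : Fin N → Matrix (Fin 2) (Fin 2) ℂ}
    (ht : ∀ i, t i 1 0 = 0) {j : Fin N → Fin 2} (hj : kronAct t (dicke N M) j ≠ 0) :
    (Finset.univ.filter fun i => j i = 1).card ≤ M := by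
  obtain ⟨m, -, hm⟩ := Finset.exists_ne_zero_of_sum_ne_zero hj
  have hdicke : dicke N M m ≠ 0 := right_ne_zero_of_mul hm
  have hfactor : ∀ i, t i (j i) (m i) ≠ 0 :=
    fun i => Finset.prod_ne_zero_iff.mp (left_ne_zero_of_mul hm) i (Finset.mem_univ i)
  have hsub : (Finset.univ.filter fun i => j i = 1) ⊆ Finset.univ.filter fun i => m i = 1 := by
    intro i hi
    simp only [Finset.mem_filter, Finset.mem_univ, true_and] at hi ⊢
    by_contra hmi
    have hm0 : m i = 0 := by_contra fun h => hmi (Fin.eq_one_of_ne_zero _ h)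
    exact hfactor i (by rw [hi, hm0, ht i])
  calc _ ≤ (Finset.univ.filter fun i => m i = 1).card := Finset.card_le_card hsub
    _ = M := by by_contra h; exact hdicke (if_neg h)

theorem qcone_dicke_subset (M : ℕ) : qcone (dicke N M) ⊆
    {φ | ((N : ℝ) - M) * ∑ j, ‖φ j‖ ^ 2 ≤ ∑ i, lmax (qrdm φ i)} := by
  rintro _ ⟨c, g, rfl⟩
  choose u hu ht using fun i =>
    exists_unitary_star_mul_apply_one_zero (g i : Matrix (Fin 2) (Fin 2) ℂ)
  set t := fun i => star (u i) * (g i : Matrix (Fin 2) (Fin 2) ℂ)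
  set χ := c • kronAct t (dicke N M)
  have hφ : c • qact g (dicke N M) = kronAct u χ := by
    have hg : u * t = fun i => (g i : Matrix (Fin 2) (Fin 2) ℂ) := by
      funext i
      simp only [t, Pi.mul_apply, ← Matrix.mul_assoc, mem_unitaryGroup_iff.mp (hu i),
        Matrix.one_mul]
    rw [kronAct_smul, kronAct_kronAct, hg, qact_eq_kronAct]
  have hχ (j) (hj : χ j ≠ 0) : (Finset.univ.filter fun i => j i = 1).card ≤ M :=
    card_filter_le_of_kronAct_dicke_ne_zero ht (right_ne_zero_of_mul hj)
  rw [Set.mem_ofPred_eq, hφ, sum_norm_sq_kronAct hu]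
  calc ((N : ℝ) - M) * ∑ j, ‖χ j‖ ^ 2 ≤ ∑ i, (qrdm χ i 0 0).re :=
        sub_mul_sum_norm_sq_le_sum_re_qrdm M hχ
    _ ≤ ∑ i, lmax (qrdm χ i) :=
        Finset.sum_le_sum fun i _ => re_apply_zero_zero_le_lmax (qrdm_isHermitian χ i)
    _ = ∑ i, lmax (qrdm (kronAct u χ) i) := by
        simp only [qrdm_kronAct hu, lmax_unitary_conj (hu _)]

theorem isClosed_setOf_sub_mul_le_sum_lmax (M : ℕ) :
    IsClosed {φ : (Fin N → Fin 2) → ℂ | ((N : ℝ) - M) * ∑ j, ‖φ j‖ ^ 2 ≤ ∑ i, lmax (qrdm φ i)} :=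
  isClosed_le (by fun_prop) (continuous_finsetSum _ fun i _ => continuous_lmax_qrdm i)

end Qubits

theorem dicke_orbit_closure_eigenvalue_bound_general (N M : ℕ)
    (ψ : (Fin N → Fin 2) → ℂ)
    (hnorm : ∑ j : Fin N → Fin 2, ‖ψ j‖ ^ 2 = 1)
    (hmem : ψ ∈ closure (qcone (dicke N M))) :
    (N : ℝ) - M ≤ ∑ i : Fin N, lmax (qrdm ψ i) := by
  have h : ((N : ℝ) - M) * ∑ j, ‖ψ j‖ ^ 2 ≤ ∑ i, lmax (qrdm ψ i) :=
    closure_minimal (qcone_dicke_subset M) (isClosed_setOf_sub_mul_le_sum_lmax M) hmem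
  rwa [hnorm, mul_one] at h

/-- Every normalized state in the SLOCC orbit closure of the Dicke state `|M,N⟩`
(with `2M < N`) satisfies `∑ᵢ λ_max(ρ⁽ⁱ⁾) ≥ N − M`. -/
theorem dicke_orbit_closure_eigenvalue_bound (N M : ℕ) (hMN : 2 * M < N)
    (ψ : (Fin N → Fin 2) → ℂ)
    (hnorm : ∑ j : Fin N → Fin 2, ‖ψ j‖ ^ 2 = 1)
    (hmem : ψ ∈ closure (qcone (dicke N M))) :
    (N : ℝ) - M ≤ ∑ i : Fin N, lmax (qrdm ψ i) :=
  dicke_orbit_closure_eigenvalue_bound_general N M ψ hnorm hmem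
end
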